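/- Let H > 0, K > 0, and suppose the bifractional Brownian motion covariance R_{H,K}(s,t) = 2^{−K}((t^{2H} + s^{2H})^K − |t−s|^{2HK}) is nonnegative definite on [0,∞). Then K ≤ 1/H. Equivalently, if K > 1/H then there exists t ≥ 0 such that (R_{H,K}(1,t))^2 > R_{H,K}(1,1) · R_{H,K}(t,t), so R_{H,K} fails the Cauchy–Schwarz inequality and is not nonnegative definite. -/
import Mathlib


open scoped ComplexOrder

/-- The bifractional Brownian motion covariance kernel. -/
noncomputable def Rbif (H K s t : ℝ) : ℝ :=
  (2 : ℝ) ^ (-K) * ((t ^ (2 * H) + s ^ (2 * H)) ^ K - |t - s| ^ (2 * H * K))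

lemma Rbif_symm (H K s t : ℝ) : Rbif H K s t = Rbif H K t s := by
  unfold Rbif
  rw [add_comm (s ^ (2*H)), abs_sub_comm]

lemma Rbif_one_one (H K : ℝ) (hH : 0 < H) (hK : 0 < K) : Rbif H K 1 1 = 1 := by
  unfold Rbif
  rw [Real.one_rpow, sub_self, abs_zero,
    Real.zero_rpow (by positivity : (0:ℝ) < 2*H*K).ne', sub_zero,
    show (1:ℝ) + 1 = 2 by norm_num, ← Real.rpow_add two_pos, neg_add_cancel, Real.rpow_zero]

lemma Rbif_diag (H K t : ℝ) (hH : 0 < H) (hK : 0 < K) (ht : 0 ≤ t) :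
    Rbif H K t t = t ^ (2*H*K) := by
  unfold Rbif
  rw [sub_self, abs_zero, Real.zero_rpow (by positivity : (0:ℝ) < 2*H*K).ne', sub_zero,
    show t ^ (2*H) + t ^ (2*H) = 2 * t ^ (2*H) by ring,
    Real.mul_rpow (by norm_num) (Real.rpow_nonneg ht _),
    ← mul_assoc, ← Real.rpow_add two_pos, neg_add_cancel, Real.rpow_zero, one_mul,
    ← Real.rpow_mul ht]

lemma Rbif_key (H K : ℝ) (hH : 0 < H) (hK : 0 < K) (h : 1 / H < K) :
    ∃ t : ℝ, 0 ≤ t ∧ Rbif H K 1 1 * Rbif H K t t < (Rbif H K 1 t) ^ 2 := by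
  have hHK : 1 < H * K := by
    rw [div_lt_iff₀ hH] at h; nlinarith
  set a := 2*H*K - 2 with ha
  have ha0 : 0 < a := by nlinarith
  set c := (2:ℝ) ^ (-(2*K)) with hc
  have hc0 : 0 < c := Real.rpow_pos_of_pos two_pos _
  set t := min (1/2) ((c/2) ^ (1/a)) with htdef
  have ht0 : 0 < t := lt_min (by norm_num) (Real.rpow_pos_of_pos (by positivity) _)
  have ht12 : t ≤ 1/2 := min_le_left _ _
  have hta : t ^ a < c := by
    have h1 : t ^ a ≤ ((c/2) ^ (1/a)) ^ a :=
      Real.rpow_le_rpow ht0.le (min_le_right _ _) ha0.le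
    have h2 : ((c/2) ^ (1/a)) ^ a = c/2 := by
      rw [← Real.rpow_mul (by positivity), one_div, inv_mul_cancel₀ ha0.ne', Real.rpow_one]
    linarith
  refine ⟨t, ht0.le, ?_⟩
  rw [Rbif_one_one H K hH hK, Rbif_diag H K t hH hK ht0.le, one_mul]
  -- lower bound on `Rbif H K 1 t`
  have h2K : (0:ℝ) < (2:ℝ) ^ (-K) := Real.rpow_pos_of_pos two_pos _
  have hB : (2:ℝ) ^ (-K) * t ≤ Rbif H K 1 t := by
    unfold Rbif
    rw [Real.one_rpow]
    have hub : |t - 1| ^ (2*H*K) ≤ 1 - t := by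
      rw [abs_of_nonpos (by linarith), neg_sub]
      calc (1-t) ^ (2*H*K) ≤ (1-t) ^ (1:ℝ) :=
            Real.rpow_le_rpow_of_exponent_ge (by linarith) (by linarith) (by nlinarith)
        _ = 1 - t := Real.rpow_one _
    have hlb : 1 ≤ (t ^ (2*H) + 1) ^ K := by
      calc (1:ℝ) = 1 ^ K := (Real.one_rpow K).symm
        _ ≤ (t ^ (2*H) + 1) ^ K :=
            Real.rpow_le_rpow (by norm_num)
              (by nlinarith [Real.rpow_nonneg ht0.le (2*H)]) hK.le
    have : t ≤ (t ^ (2*H) + 1) ^ K - |t - 1| ^ (2*H*K) := by linarith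
    nlinarith
  have hsq : ((2:ℝ) ^ (-K) * t) ^ 2 ≤ (Rbif H K 1 t) ^ 2 :=
    pow_le_pow_left₀ (by positivity) hB 2
  have hcsq : ((2:ℝ) ^ (-K)) ^ 2 = c := by
    rw [hc, ← Real.rpow_natCast ((2:ℝ) ^ (-K)) 2, ← Real.rpow_mul (by norm_num)]
    norm_num
    ring_nf
  have hsplit : t ^ (2*H*K) = t ^ a * t ^ (2:ℕ) := by
    rw [← Real.rpow_natCast t 2, ← Real.rpow_add ht0]
    norm_num [ha]
  calc t ^ (2*H*K) = t ^ a * t ^ (2:ℕ) := hsplit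
    _ < c * t ^ (2:ℕ) := by
        exact mul_lt_mul_of_pos_right hta (by positivity)
    _ = ((2:ℝ) ^ (-K) * t) ^ 2 := by rw [mul_pow, hcsq]
    _ ≤ (Rbif H K 1 t) ^ 2 := hsq

/-- If `R_{H,K}` is nonnegative definite on `[0,∞)`, then `K ≤ 1/H`.
Equivalently, if `K > 1/H` then the Cauchy–Schwarz inequality
`R_{H,K}(1,t)² ≤ R_{H,K}(1,1)·R_{H,K}(t,t)` fails for some `t ≥ 0`. -/
theorem Rbif_nonneg_definite_implies (H K : ℝ) (hH : 0 < H) (hK : 0 < K) :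
    ((∀ (n : ℕ) (t : Fin n → ℝ), (∀ i, 0 ≤ t i) → ∀ z : Fin n → ℂ,
        0 ≤ ∑ j : Fin n, ∑ k : Fin n,
          z j * ((Rbif H K (t j) (t k) : ℝ) : ℂ) * (starRingEnd ℂ) (z k)) →
      K ≤ 1 / H) ∧
    (1 / H < K →
      ∃ t : ℝ, 0 ≤ t ∧ Rbif H K 1 1 * Rbif H K t t < (Rbif H K 1 t) ^ 2) := by
  constructor
  · intro hnd
    by_contra hlt
    push_neg at hlt
    obtain ⟨t₀, ht₀, hcs⟩ := Rbif_key H K hH hK hlt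
    set B := Rbif H K 1 t₀ with hBdef
    have h2 := hnd 2 ![1, t₀] (by
      intro i; fin_cases i <;> simp [ht₀])
      ![(B : ℂ), -1]
    simp only [Fin.sum_univ_two, Matrix.cons_val_zero, Matrix.cons_val_one,
      Matrix.head_cons, map_neg, map_one, Complex.conj_ofReal] at h2
    rw [Rbif_one_one H K hH hK] at h2
    rw [Rbif_symm H K t₀ 1, ← hBdef] at h2
    have h2' : (0:ℂ) ≤ ((Rbif H K t₀ t₀ - B ^ 2 : ℝ) : ℂ) := by
      convert h2 using 1
      push_cast
      ring
    rw [Complex.zero_le_real] at h2'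
    rw [Rbif_one_one H K hH hK, one_mul] at hcs
    linarith
  · exact Rbif_key H K hH hK
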